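/- For the finite-horizon discounted dynamic programming recursion V_q^α(x) = min_{u∈{0,1}} [ C x + (1−u)λ + α Σ_{ς=0}^{1} p_ς Σ_{d=0}^{min(x,M)} V_{q−1}^α(x − d + u ς) P_d(x) ] with V_0^α(x) = C x, every iterate V_q^α is strictly increasing in x: for all x₁ > x₂ ≥ 0 and all q ≥ 0, V_q^α(x₁) > V_q^α(x₂). -/
import Mathlib


open Finset

/-- Probability that exactly `d` of the `M` mini-slot departures occur, under
the mixture of `Bin(M,r)` (jamming, prob. `q`) and `Bin(M,r')` (no jamming). -/
noncomputable def mixP (M : ℕ) (q r r' : ℝ) (d : ℕ) : ℝ :=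
  (M.choose d : ℝ) * (r ^ d * (1 - r) ^ (M - d) * q + r' ^ d * (1 - r') ^ (M - d) * (1 - q))

/-- Departure distribution truncated at `min x M` when `x` users are present. -/
noncomputable def Pd (M : ℕ) (q r r' : ℝ) (x d : ℕ) : ℝ :=
  if d < min x M then mixP M q r r' d
  else if d = min x M then ∑ e ∈ Finset.Icc (min x M) M, mixP M q r r' e
  else 0

/-- Finite-horizon discounted value iteration:
`V 0 x = C x` and
`V (s+1) x = min_{u∈{0,1}} [C x + (1−u) λ + α Σ_ς p_ς Σ_d V s (x−d+uς) P_d(x)]`. -/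
noncomputable def Vfin (M : ℕ) (q r r' C lam p α : ℝ) : ℕ → ℕ → ℝ
  | 0, x => C * x
  | s + 1, x =>
      min
        (C * x + (1 - (0 : ℝ)) * lam + α *
          (p * ∑ d ∈ Finset.range (min x M + 1),
              Vfin M q r r' C lam p α s (x - d + 0) * Pd M q r r' x d
            + (1 - p) * ∑ d ∈ Finset.range (min x M + 1),
              Vfin M q r r' C lam p α s (x - d) * Pd M q r r' x d))
        (C * x + (1 - (1 : ℝ)) * lam + α *
          (p * ∑ d ∈ Finset.range (min x M + 1),
              Vfin M q r r' C lam p α s (x - d + 1) * Pd M q r r' x d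
            + (1 - p) * ∑ d ∈ Finset.range (min x M + 1),
              Vfin M q r r' C lam p α s (x - d) * Pd M q r r' x d))

open Finset

lemma mixP_nonneg (M : ℕ) (q r r' : ℝ) (hq0 : 0 ≤ q) (hq1 : q ≤ 1)
    (hr0 : 0 ≤ r) (hr1 : r ≤ 1) (hr'0 : 0 ≤ r') (hr'1 : r' ≤ 1) (d : ℕ) :
    0 ≤ mixP M q r r' d := by
  unfold mixP
  have h1 : (0:ℝ) ≤ 1 - r := by linarith
  have h2 : (0:ℝ) ≤ 1 - r' := by linarith
  have h3 : (0:ℝ) ≤ 1 - q := by linarith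
  positivity

lemma Pd_nonneg (M : ℕ) (q r r' : ℝ) (hq0 : 0 ≤ q) (hq1 : q ≤ 1)
    (hr0 : 0 ≤ r) (hr1 : r ≤ 1) (hr'0 : 0 ≤ r') (hr'1 : r' ≤ 1) (x d : ℕ) :
    0 ≤ Pd M q r r' x d := by
  unfold Pd
  split_ifs
  · exact mixP_nonneg M q r r' hq0 hq1 hr0 hr1 hr'0 hr'1 d
  · exact Finset.sum_nonneg fun e _ => mixP_nonneg M q r r' hq0 hq1 hr0 hr1 hr'0 hr'1 e
  · exact le_refl _

lemma sum_step (M : ℕ) (q r r' : ℝ) (hq0 : 0 ≤ q) (hq1 : q ≤ 1)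
    (hr0 : 0 ≤ r) (hr1 : r ≤ 1) (hr'0 : 0 ≤ r') (hr'1 : r' ≤ 1)
    (f : ℕ → ℝ) (hf : Monotone f) (x k : ℕ) :
    ∑ d ∈ Finset.range (min x M + 1), f (x - d + k) * Pd M q r r' x d ≤
    ∑ d ∈ Finset.range (min (x+1) M + 1), f (x + 1 - d + k) * Pd M q r r' (x+1) d := by
  have hmix := mixP_nonneg M q r r' hq0 hq1 hr0 hr1 hr'0 hr'1
  rcases le_or_gt M x with hMx | hxM
  · have e1 : min x M = M := min_eq_right hMx
    have e2 : min (x+1) M = M := min_eq_right (by omega)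
    rw [e1, e2]
    apply Finset.sum_le_sum
    intro d hd
    have hdM : d ≤ M := by simpa [Nat.lt_succ_iff] using hd
    have hdx : d ≤ x := le_trans hdM hMx
    have hPd : Pd M q r r' x d = Pd M q r r' (x+1) d := by
      unfold Pd; rw [e1, e2]
    rw [← hPd]
    apply mul_le_mul_of_nonneg_right
    · exact hf (by omega)
    · exact Pd_nonneg M q r r' hq0 hq1 hr0 hr1 hr'0 hr'1 x d
  · -- x < M
    have e1 : min x M = x := min_eq_left (le_of_lt hxM)
    have e2 : min (x+1) M = x + 1 := min_eq_left (by omega)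
    rw [e1, e2]
    rw [Finset.sum_range_succ, Finset.sum_range_succ, Finset.sum_range_succ]
    have hPxx : Pd M q r r' x x
        = mixP M q r r' x + ∑ e ∈ Finset.Icc (x+1) M, mixP M q r r' e := by
      unfold Pd
      rw [e1]
      simp only [lt_irrefl, if_false, if_pos rfl]
      rw [← Finset.Ico_add_one_right_eq_Icc, ← Finset.Ico_add_one_right_eq_Icc,
        Finset.sum_eq_sum_Ico_succ_bot (by omega)]
      simp
    have hPx1x : Pd M q r r' (x+1) x = mixP M q r r' x := by
      unfold Pd; rw [e2]; simp
    have hPx1x1 : Pd M q r r' (x+1) (x+1)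
        = ∑ e ∈ Finset.Icc (x+1) M, mixP M q r r' e := by
      unfold Pd; rw [e2]; simp
    have hsum : ∑ d ∈ Finset.range x, f (x - d + k) * Pd M q r r' x d ≤
        ∑ d ∈ Finset.range x, f (x + 1 - d + k) * Pd M q r r' (x+1) d := by
      apply Finset.sum_le_sum
      intro d hd
      have hdx : d < x := Finset.mem_range.mp hd
      have hP1 : Pd M q r r' x d = mixP M q r r' d := by
        unfold Pd; rw [e1, if_pos hdx]
      have hP2 : Pd M q r r' (x+1) d = mixP M q r r' d := by
        unfold Pd; rw [e2, if_pos (by omega)]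
      rw [hP1, hP2]
      exact mul_le_mul_of_nonneg_right (hf (by omega)) (hmix d)
    have hT : 0 ≤ ∑ e ∈ Finset.Icc (x+1) M, mixP M q r r' e :=
      Finset.sum_nonneg fun e _ => hmix e
    have hfk : f (x - x + k) ≤ f (x + 1 - x + k) := hf (by omega)
    have hfk2 : f (x - x + k) = f (x + 1 - (x+1) + k) := by congr 1; omega
    rw [hPxx, hPx1x, hPx1x1, ← hfk2]
    nlinarith [mul_le_mul_of_nonneg_right hfk (hmix x)]

/-- Every iterate of the finite-horizon discounted recursion is strictly
increasing in the state. -/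
theorem finite_horizon_value_strictly_increasing
    (M : ℕ) (hM : 1 ≤ M)
    (q r r' p : ℝ) (hq0 : 0 ≤ q) (hq1 : q ≤ 1) (hr0 : 0 ≤ r) (hr1 : r ≤ 1)
    (hr'0 : 0 ≤ r') (hr'1 : r' ≤ 1) (hp0 : 0 ≤ p) (hp1 : p ≤ 1)
    (C lam α : ℝ) (hC : 0 < C) (hα0 : 0 < α) (hα1 : α < 1) :
    ∀ s : ℕ, ∀ x₁ x₂ : ℕ, x₂ < x₁ →
      Vfin M q r r' C lam p α s x₂ < Vfin M q r r' C lam p α s x₁ := by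
  intro s
  induction s with
  | zero =>
    intro x₁ x₂ h
    show C * (x₂:ℝ) < C * (x₁:ℝ)
    exact mul_lt_mul_of_pos_left (by exact_mod_cast h) hC
  | succ s ih =>
    have hmono : Monotone (Vfin M q r r' C lam p α s) := by
      intro a b hab
      rcases lt_or_eq_of_le hab with h | h
      · exact le_of_lt (ih b a h)
      · rw [h]
    have hstep : ∀ k x,
        ∑ d ∈ Finset.range (min x M + 1),
          Vfin M q r r' C lam p α s (x - d + k) * Pd M q r r' x d ≤
        ∑ d ∈ Finset.range (min (x+1) M + 1),
          Vfin M q r r' C lam p α s (x + 1 - d + k) * Pd M q r r' (x+1) d :=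
      fun k x => sum_step M q r r' hq0 hq1 hr0 hr1 hr'0 hr'1 _ hmono x k
    have hstep0 : ∀ x,
        ∑ d ∈ Finset.range (min x M + 1),
          Vfin M q r r' C lam p α s (x - d) * Pd M q r r' x d ≤
        ∑ d ∈ Finset.range (min (x+1) M + 1),
          Vfin M q r r' C lam p α s (x + 1 - d) * Pd M q r r' (x+1) d := by
      intro x
      have := hstep 0 x
      simpa using this
    have key : ∀ x, Vfin M q r r' C lam p α (s+1) x <
        Vfin M q r r' C lam p α (s+1) (x+1) := by
      intro x
      rw [Vfin, Vfin]
      have hCx : C * (x:ℝ) < C * ((x:ℕ)+1 : ℕ) := by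
        push_cast
        nlinarith
      have h1p : (0:ℝ) ≤ 1 - p := by linarith
      apply min_lt_min
      · have hs1 := hstep 0 x
        have hs0 := hstep0 x
        have hα1p := mul_le_mul_of_nonneg_left hs1 hp0
        have hα0p := mul_le_mul_of_nonneg_left hs0 h1p
        push_cast at hCx ⊢
        nlinarith
      · have hs1 := hstep 1 x
        have hs0 := hstep0 x
        have hα1p := mul_le_mul_of_nonneg_left hs1 hp0
        have hα0p := mul_le_mul_of_nonneg_left hs0 h1p
        push_cast at hCx ⊢
        nlinarith
    intro x₁ x₂ h
    exact strictMono_nat_of_lt_succ key h
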